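/- Let α > 2 and ω > 0, and set U*(ω) = inf{ −U(x) : K_ω(x) = 0 }. If a configuration x satisfies K_ω(x) < 0, then −U(x) > U*(ω). (Proof by scaling: since λ ↦ K_ω(λx) = ω²λ² I(x) + λ^{−α} α U(x) is negative at λ = 1 and positive for large λ, there is λ* > 1 with K_ω(λ* x) = 0, whence −U(x) ≥ (λ*)^α U*(ω) > U*(ω).) -/

import Mathlib

namespace NBodyPaper

open Real

noncomputable section

abbrev E3 := EuclideanSpace ℝ (Fin 3)

variable {N : ℕ}

/-- The α-homogeneous potential `U(x) = -∑_{i<j} m_i m_j / |x_i - x_j|^α`. -/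
def pot (α : ℝ) (m : Fin N → ℝ) (q : Fin N → E3) : ℝ :=
  -∑ i : Fin N, ∑ j ∈ Finset.univ.filter (fun j => i < j), m i * m j / ‖q i - q j‖ ^ α

/-- Moment of inertia `I(x) = ∑ m_i |x_i|²`. -/
def inertia (m : Fin N → ℝ) (q : Fin N → E3) : ℝ := ∑ i, m i * ‖q i‖ ^ 2

/-- Collision-free configuration. -/
def OffDiag (q : Fin N → E3) : Prop := ∀ i j, i ≠ j → q i ≠ q j

/-- Center of mass at the origin. -/
def comZero (m : Fin N → ℝ) (q : Fin N → E3) : Prop := ∑ i, m i • q i = 0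

/-- The threshold function `K_ω(x) = ω² I(x) + α U(x)`. -/
def Kfun (α : ℝ) (m : Fin N → ℝ) (ω : ℝ) (q : Fin N → E3) : ℝ :=
  ω ^ 2 * inertia m q + α * pot α m q

/-- `E_ω(x) = (ω²/2) I(x) + U(x)`. -/
def Eomega (α : ℝ) (m : Fin N → ℝ) (ω : ℝ) (q : Fin N → E3) : ℝ :=
  ω ^ 2 / 2 * inertia m q + pot α m q

/-- The excited energy `E*(ω) = inf { E_ω(x) : K_ω(x) = 0 }`, the infimum taken over
collision-free configurations with center of mass zero. -/
def Estar (α : ℝ) (m : Fin N → ℝ) (ω : ℝ) : ℝ :=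
  sInf {e : ℝ | ∃ q : Fin N → E3, OffDiag q ∧ comZero m q ∧ Kfun α m ω q = 0 ∧ e = Eomega α m ω q}

/-- `U*(ω) = inf { −U(x) : K_ω(x) = 0 }`, over collision-free configurations with
center of mass zero. -/
def Ustar (α : ℝ) (m : Fin N → ℝ) (ω : ℝ) : ℝ :=
  sInf {u : ℝ | ∃ q : Fin N → E3, OffDiag q ∧ comZero m q ∧ Kfun α m ω q = 0 ∧ u = -pot α m q}

/-!
Scaling a configuration by `c > 0` multiplies `I` by `c²` and `U` by `c^(-α)`, so
`K_ω(c • x) = c^(-α) (ω² c^(2+α) I(x) + α U(x))`. When `K_ω(x) < 0` the factor `c^(2+α)` needed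
to make this vanish is `α (-U(x)) / (ω² I(x)) > 1`; the scaled configuration is then admissible
for `U*(ω)`, and `-U(c • x) = c^(-α) (-U(x)) < -U(x)`.
-/

section

variable {α ω c : ℝ} {m : Fin N → ℝ} {q : Fin N → E3}

lemma inertia_nonneg (hm : ∀ i, 0 ≤ m i) (q : Fin N → E3) : 0 ≤ inertia m q :=
  Finset.sum_nonneg fun i _ => mul_nonneg (hm i) (sq_nonneg _)

lemma inertia_smul (hc : 0 ≤ c) (q : Fin N → E3) :
    inertia m (c • q) = c ^ 2 * inertia m q := by
  simp only [inertia, Pi.smul_apply, norm_smul, Real.norm_eq_abs, abs_of_nonneg hc, Finset.mul_sum]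
  exact Finset.sum_congr rfl fun i _ => by ring

lemma pot_smul (hc : 0 < c) (q : Fin N → E3) : pot α m (c • q) = c ^ (-α) * pot α m q := by
  simp only [pot, Pi.smul_apply, ← smul_sub, norm_smul, Real.norm_eq_abs, abs_of_pos hc,
    mul_neg, Finset.mul_sum]
  refine congrArg Neg.neg (Finset.sum_congr rfl fun i _ => Finset.sum_congr rfl fun j _ => ?_)
  rw [Real.mul_rpow hc.le (norm_nonneg _), Real.rpow_neg hc.le, div_mul_eq_div_div_swap,
    div_eq_inv_mul]

lemma Kfun_smul (hc : 0 < c) (q : Fin N → E3) :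
    Kfun α m ω (c • q) =
      c ^ (-α) * (ω ^ 2 * c ^ (2 + α) * inertia m q + α * pot α m q) := by
  have hc2 : c ^ 2 = c ^ (-α) * c ^ (2 + α) := by
    rw [← Real.rpow_add hc, show -α + (2 + α) = 2 by ring, Real.rpow_two]
  rw [Kfun, inertia_smul hc.le, pot_smul hc, hc2]
  ring

lemma OffDiag.smul (hq : OffDiag q) (hc : c ≠ 0) : OffDiag (c • q) :=
  fun i j hij h => hq i j hij (smul_right_injective E3 hc h)

lemma comZero.smul (hq : comZero m q) : comZero m (c • q) := by
  simp only [comZero, Pi.smul_apply, smul_comm (m _) c, ← Finset.smul_sum]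
  rw [show ∑ i, m i • q i = 0 from hq, smul_zero]

/-- At the origin every term of `U` is the junk value `0 / 0 = 0`. -/
lemma inertia_pos_of_pot_ne_zero (hα : α ≠ 0) (hm : ∀ i, 0 < m i) (hU : pot α m q ≠ 0) :
    0 < inertia m q := by
  refine (inertia_nonneg (fun i => (hm i).le) q).lt_of_ne fun hI => hU ?_
  have hq : ∀ i, q i = 0 := fun i => by
    have := (Finset.sum_eq_zero_iff_of_nonneg fun i _ =>
      mul_nonneg (hm i).le (sq_nonneg ‖q i‖)).mp hI.symm i (Finset.mem_univ i)
    simpa [(hm i).ne'] using this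
  simp [pot, hq, Real.zero_rpow hα]

lemma pot_neg_of_Kfun_neg (hα : 0 < α) (hm : ∀ i, 0 ≤ m i) (hK : Kfun α m ω q < 0) :
    pot α m q < 0 := by
  have hI := mul_nonneg (sq_nonneg ω) (inertia_nonneg hm q)
  rw [Kfun] at hK
  nlinarith

lemma neg_pot_nonneg_of_Kfun_eq_zero (hα : 0 < α) (hm : ∀ i, 0 ≤ m i)
    (hK : Kfun α m ω q = 0) :
    0 ≤ -pot α m q := by
  have hI := mul_nonneg (sq_nonneg ω) (inertia_nonneg hm q)
  rw [Kfun] at hK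
  nlinarith

lemma Ustar_le_neg_pot (hα : 0 < α) (hm : ∀ i, 0 ≤ m i) (hq : OffDiag q) (hcom : comZero m q)
    (hK : Kfun α m ω q = 0) :
    Ustar α m ω ≤ -pot α m q :=
  csInf_le ⟨0, fun _ ⟨_, _, _, hK', hu⟩ => hu ▸ neg_pot_nonneg_of_Kfun_eq_zero hα hm hK'⟩
    ⟨q, hq, hcom, hK, rfl⟩

lemma exists_one_lt_Kfun_smul_eq_zero (hα : 0 < α) (hω : ω ≠ 0) (hm : ∀ i, 0 < m i)
    (hK : Kfun α m ω q < 0) : ∃ c : ℝ, 1 < c ∧ Kfun α m ω (c • q) = 0 := by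
  have hU := pot_neg_of_Kfun_neg hα (fun i => (hm i).le) hK
  rw [Kfun] at hK
  have hωI : 0 < ω ^ 2 * inertia m q :=
    mul_pos (by positivity) (inertia_pos_of_pot_ne_zero hα.ne' hm hU.ne)
  set A := α * -pot α m q / (ω ^ 2 * inertia m q)
  have hA : 1 < A := by rw [one_lt_div hωI]; linarith
  have h2α : 0 < 2 + α := by linarith
  refine ⟨A ^ (2 + α)⁻¹, Real.one_lt_rpow hA (inv_pos.mpr h2α), ?_⟩
  have hωAI : ω ^ 2 * A * inertia m q = α * -pot α m q := by
    rw [mul_right_comm]; exact mul_div_cancel₀ _ hωI.ne'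
  rw [Kfun_smul (by positivity), Real.rpow_inv_rpow (by positivity) h2α.ne', hωAI]
  ring

end

/-- **Below the constraint set the potential is large**: for `α > 2` and `ω > 0`, if a
configuration satisfies `K_ω(x) < 0`, then `−U(x) > U*(ω)`. -/
theorem neg_pot_gt_Ustar_of_Kfun_neg {N : ℕ} (α ω : ℝ) (hα : 2 < α) (hω : 0 < ω)
    (m : Fin N → ℝ) (hm : ∀ i, 0 < m i)
    (x : Fin N → E3) (hx : OffDiag x) (hcom : comZero m x)
    (hK : Kfun α m ω x < 0) :
    Ustar α m ω < -pot α m x := by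
  have hα0 : 0 < α := by linarith
  obtain ⟨c, hc, hKc⟩ := exists_one_lt_Kfun_smul_eq_zero hα0 hω.ne' hm hK
  have hU : 0 < -pot α m x := neg_pos.mpr (pot_neg_of_Kfun_neg hα0 (fun i => (hm i).le) hK)
  calc Ustar α m ω ≤ -pot α m (c • x) :=
        Ustar_le_neg_pot hα0 (fun i => (hm i).le) (hx.smul (by positivity)) hcom.smul hKc
    _ = c ^ (-α) * -pot α m x := by rw [pot_smul (by positivity), mul_neg]
    _ < -pot α m x :=
        mul_lt_of_lt_one_left hU (Real.rpow_lt_one_of_one_lt_of_neg hc (by linarith))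

end
end NBodyPaper
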